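/- arXiv:1703.00118 — 3 statements merged into one kernel-verified Lean document; each statement's English description precedes it below -/
import Mathlib

section
/- Let q ∈ (0,1), δ > 0, a ≥ 0, and let G : ℝ → ℝ be nonnegative and integrable on (0, δ]. Suppose that for every k ∈ ℕ, the integral of G over the interval (q^{k+1}·δ, q^k·δ] equals q^k·(1−q)·δ·a. Then for every ū ∈ (0, δ], q·ū·a ≤ ∫ over (0, ū] of G ≤ (1/q)·ū·a. -/
open MeasureTheory

/-- Step Three of Appendix B in its general form (Remark B.1):
the dyadic sandwich for the integral of the initial-data profile. -/
theorem stmt_2 (q δ a : ℝ) (hq0 : 0 < q) (hq1 : q < 1) (hδ : 0 < δ) (ha : 0 ≤ a)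
    (G : ℝ → ℝ) (hGnn : ∀ x, 0 ≤ G x)
    (hGint : IntegrableOn G (Set.Ioc 0 δ))
    (hpiece : ∀ k : ℕ,
      ∫ x in Set.Ioc (q^(k+1) * δ) (q^k * δ), G x = q^k * (1 - q) * δ * a) :
    ∀ ub : ℝ, ub ∈ Set.Ioc (0:ℝ) δ →
      q * ub * a ≤ ∫ x in Set.Ioc (0:ℝ) ub, G x ∧
      (∫ x in Set.Ioc (0:ℝ) ub, G x) ≤ (1/q) * ub * a := by
  have hpow : ∀ n : ℕ, 0 < q ^ n * δ := fun n => mul_pos (pow_pos hq0 n) hδ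
  have hmono_pow : ∀ {m n : ℕ}, m ≤ n → q ^ n * δ ≤ q ^ m * δ := by
    intro m n h
    exact mul_le_mul_of_nonneg_right (pow_le_pow_of_le_one hq0.le hq1.le h) hδ.le
  have hsubδ : ∀ n : ℕ, Set.Ioc (0:ℝ) (q ^ n * δ) ⊆ Set.Ioc 0 δ := by
    intro n
    apply Set.Ioc_subset_Ioc le_rfl
    simpa using hmono_pow (Nat.zero_le n)
  -- partial sums
  have hpartial : ∀ N m : ℕ,
      ∫ x in Set.Ioc (q ^ (N + m) * δ) (q ^ N * δ), G x = (q ^ N - q ^ (N + m)) * δ * a := by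
    intro N m
    induction m with
    | zero => simp
    | succ m ih =>
      have h1 : q ^ (N + m + 1) * δ ≤ q ^ (N + m) * δ := hmono_pow (Nat.le_succ _)
      have h2 : q ^ (N + m) * δ ≤ q ^ N * δ := hmono_pow (Nat.le_add_right _ _)
      have hdisj : Disjoint (Set.Ioc (q ^ (N + m + 1) * δ) (q ^ (N + m) * δ))
          (Set.Ioc (q ^ (N + m) * δ) (q ^ N * δ)) := by
        rw [Set.Ioc_disjoint_Ioc]
        simp [le_max_iff, min_le_iff]
      have hun : Set.Ioc (q ^ (N + m + 1) * δ) (q ^ (N + m) * δ) ∪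
          Set.Ioc (q ^ (N + m) * δ) (q ^ N * δ) = Set.Ioc (q ^ (N + m + 1) * δ) (q ^ N * δ) :=
        Set.Ioc_union_Ioc_eq_Ioc h1 h2
      have hint1 : IntegrableOn G (Set.Ioc (q ^ (N + m + 1) * δ) (q ^ (N + m) * δ)) := by
        apply hGint.mono_set
        exact Set.Ioc_subset_Ioc (hpow _).le (by simpa using hmono_pow (Nat.zero_le (N + m)))
      have hint2 : IntegrableOn G (Set.Ioc (q ^ (N + m) * δ) (q ^ N * δ)) := by
        apply hGint.mono_set
        exact Set.Ioc_subset_Ioc (hpow _).le (by simpa using hmono_pow (Nat.zero_le N))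
      have := setIntegral_union hdisj measurableSet_Ioc hint1 hint2 (f := G) (μ := volume)
      rw [hun] at this
      rw [show N + (m + 1) = N + m + 1 by ring, this, ih, hpiece (N + m)]
      ring
  -- integral over (0, q^N δ]
  have hfull : ∀ N : ℕ, ∫ x in Set.Ioc (0:ℝ) (q ^ N * δ), G x = q ^ N * δ * a := by
    intro N
    have htend0 : Filter.Tendsto (fun m : ℕ => q ^ (N + m) * δ) Filter.atTop (nhds 0) := by
      have : Filter.Tendsto (fun m : ℕ => q ^ m) Filter.atTop (nhds 0) :=
        tendsto_pow_atTop_nhds_zero_of_lt_one hq0.le hq1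
      have h2 : Filter.Tendsto (fun m : ℕ => q ^ N * q ^ m * δ) Filter.atTop (nhds (q ^ N * 0 * δ)) := by
        exact ((this.const_mul (q ^ N)).mul_const δ)
      simpa [pow_add, mul_comm, mul_assoc, mul_left_comm] using h2
    have hmonoS : Monotone (fun m : ℕ => Set.Ioc (q ^ (N + m) * δ) (q ^ N * δ)) := by
      intro i j hij
      exact Set.Ioc_subset_Ioc (hmono_pow (by omega)) le_rfl
    have hUnion : (⋃ m : ℕ, Set.Ioc (q ^ (N + m) * δ) (q ^ N * δ)) = Set.Ioc (0:ℝ) (q ^ N * δ) := by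
      ext x
      simp only [Set.mem_iUnion, Set.mem_Ioc]
      constructor
      · rintro ⟨m, h1, h2⟩
        exact ⟨lt_trans (hpow _) h1, h2⟩
      · rintro ⟨h1, h2⟩
        obtain ⟨m, hm⟩ := ((htend0.eventually (eventually_lt_nhds h1)).exists)
        exact ⟨m, hm, h2⟩
    have hintU : IntegrableOn G (⋃ m : ℕ, Set.Ioc (q ^ (N + m) * δ) (q ^ N * δ)) := by
      rw [hUnion]; exact hGint.mono_set (hsubδ N)
    have htend := tendsto_setIntegral_of_monotone (fun m => measurableSet_Ioc) hmonoS hintU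
    rw [hUnion] at htend
    have htend2 : Filter.Tendsto (fun m : ℕ => ∫ x in Set.Ioc (q ^ (N + m) * δ) (q ^ N * δ), G x)
        Filter.atTop (nhds (q ^ N * δ * a)) := by
      have : Filter.Tendsto (fun m : ℕ => (q ^ N - q ^ (N + m)) * δ * a)
          Filter.atTop (nhds ((q ^ N - 0) * δ * a)) := by
        exact ((tendsto_const_nhds.sub (by
          have : Filter.Tendsto (fun m : ℕ => q ^ m) Filter.atTop (nhds 0) :=
            tendsto_pow_atTop_nhds_zero_of_lt_one hq0.le hq1
          simpa [pow_add] using this.const_mul (q ^ N))).mul_const δ).mul_const a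
      simp only [sub_zero] at this
      exact this.congr (fun m => (hpartial N m).symm)
    exact tendsto_nhds_unique htend htend2
  -- main
  intro ub hub
  obtain ⟨hub0, hubδ⟩ := hub
  have hex : ∃ n : ℕ, q ^ n * δ < ub := by
    have : Filter.Tendsto (fun n : ℕ => q ^ n * δ) Filter.atTop (nhds 0) := by
      simpa using (tendsto_pow_atTop_nhds_zero_of_lt_one hq0.le hq1).mul_const δ
    exact (this.eventually (eventually_lt_nhds hub0)).exists
  classical
  set N' := Nat.find hex with hN'
  have hspec : q ^ N' * δ < ub := Nat.find_spec hex
  have hN'pos : N' ≠ 0 := by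
    intro h
    rw [h] at hspec
    simp at hspec
    linarith
  obtain ⟨K, hK⟩ := Nat.exists_eq_succ_of_ne_zero hN'pos
  have hub_le : ub ≤ q ^ K * δ :=
    le_of_not_gt (Nat.find_min hex (show K < Nat.find hex by omega))
  have hlt : q ^ (K + 1) * δ < ub := by rw [hK] at hspec; exact hspec
  have hsub1 : Set.Ioc (0:ℝ) (q ^ (K+1) * δ) ⊆ Set.Ioc 0 ub :=
    Set.Ioc_subset_Ioc le_rfl hlt.le
  have hsub2 : Set.Ioc (0:ℝ) ub ⊆ Set.Ioc 0 (q ^ K * δ) :=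
    Set.Ioc_subset_Ioc le_rfl hub_le
  have hintub : IntegrableOn G (Set.Ioc (0:ℝ) ub) :=
    hGint.mono_set (Set.Ioc_subset_Ioc le_rfl hubδ)
  have hintK : IntegrableOn G (Set.Ioc (0:ℝ) (q ^ K * δ)) := hGint.mono_set (hsubδ K)
  have hle1 : (∫ x in Set.Ioc (0:ℝ) (q ^ (K+1) * δ), G x) ≤ ∫ x in Set.Ioc (0:ℝ) ub, G x :=
    setIntegral_mono_set hintub (Filter.Eventually.of_forall fun x => hGnn x)
      (Filter.Eventually.of_forall hsub1)
  have hle2 : (∫ x in Set.Ioc (0:ℝ) ub, G x) ≤ ∫ x in Set.Ioc (0:ℝ) (q ^ K * δ), G x :=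
    setIntegral_mono_set hintK (Filter.Eventually.of_forall fun x => hGnn x)
      (Filter.Eventually.of_forall hsub2)
  rw [hfull (K + 1)] at hle1
  rw [hfull K] at hle2
  constructor
  · calc q * ub * a ≤ q ^ (K + 1) * δ * a := by
          apply mul_le_mul_of_nonneg_right _ ha
          rw [pow_succ, mul_comm (q ^ K) q, mul_assoc]
          exact mul_le_mul_of_nonneg_left hub_le hq0.le
        _ ≤ _ := hle1
  · calc (∫ x in Set.Ioc (0:ℝ) ub, G x) ≤ q ^ K * δ * a := hle2
        _ ≤ (1 / q) * ub * a := by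
          apply mul_le_mul_of_nonneg_right _ ha
          rw [div_mul_eq_mul_div, le_div_iff₀ hq0, one_mul]
          calc q ^ K * δ * q = q ^ (K + 1) * δ := by ring
            _ ≤ ub := hlt.le
end

section
/- Let δ > 0, a > 0, and let G : ℝ → ℝ be nonnegative and integrable on (0, δ]. Suppose that for every k ∈ ℕ, the integral of G over the interval ((99/100)^{k+1}·δ, (99/100)^k·δ] equals (99/100)^k·(δ·a/100). Then for every ū ∈ (0, δ], (20/21)·ū·a ≤ ∫ over (0, ū] of G ≤ (22/21)·ū·a; equivalently, the function f(ū) := (∫ over (0,ū] of G)/(ū·a) satisfies 20/21 ≤ f(ū) ≤ 22/21. -/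
/-!
The intervals `(q^{k+1} δ, q^k δ]`, `k ≥ n`, tile `(0, q^n δ]`, so countable additivity of the
integral and the geometric series give `∫_{(0, q^n δ]} G = q^n δ a` exactly. An arbitrary
`ū ∈ (0, δ]` lies in some tile `(q^{n+1} δ, q^n δ]`, and monotonicity of `ū ↦ ∫_{(0, ū]} G`
pins the integral between `q ū a` and `ū a / q`; finally `20/21 ≤ 99/100` and `100/99 ≤ 22/21`.
-/

open MeasureTheory Set Filter Topology

theorem Antitone.iUnion_Ioc_succ_eq_Ioc {u : ℕ → ℝ} {a : ℝ} (hu : Antitone u)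
    (hlim : Tendsto u atTop (𝓝 a)) :
    ⋃ k, Ioc (u (k + 1)) (u k) = Ioc a (u 0) := by
  ext x
  simp only [mem_iUnion, mem_Ioc]
  constructor
  · rintro ⟨k, hk₁, hk₂⟩
    exact ⟨(hu.le_of_tendsto hlim (k + 1)).trans_lt hk₁, hk₂.trans (hu (Nat.zero_le k))⟩
  · rintro ⟨hax, hx⟩
    obtain ⟨n, hn⟩ := (hlim.eventually (gt_mem_nhds hax)).exists
    induction n with
    | zero => exact absurd hx (not_le.2 hn)
    | succ n ih =>
      by_cases hxn : x ≤ u n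
      · exact ⟨n, hn, hxn⟩
      · exact ih (not_le.1 hxn)

theorem Antitone.hasSum_setIntegral_Ioc {E : Type*} [NormedAddCommGroup E] [NormedSpace ℝ E]
    {μ : Measure ℝ} {f : ℝ → E} {u : ℕ → ℝ} {a : ℝ} (hu : Antitone u)
    (hlim : Tendsto u atTop (𝓝 a)) (hf : IntegrableOn f (Ioc a (u 0)) μ) :
    HasSum (fun k ↦ ∫ x in Ioc (u (k + 1)) (u k), f x ∂μ) (∫ x in Ioc a (u 0), f x ∂μ) := by
  rw [← hu.iUnion_Ioc_succ_eq_Ioc hlim] at hf ⊢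
  refine hasSum_integral_iUnion (fun _ ↦ measurableSet_Ioc) ?_ hf
  simpa only [Order.succ_eq_add_one] using hu.pairwise_disjoint_on_Ioc_succ

theorem setIntegral_Ioc_zero_pow_mul_of_geometric {μ : Measure ℝ} {f : ℝ → ℝ} {q δ c : ℝ}
    (hq₀ : 0 ≤ q) (hq₁ : q < 1) (hδ : 0 ≤ δ) (hf : IntegrableOn f (Ioc 0 δ) μ)
    (hpiece : ∀ k : ℕ, ∫ x in Ioc (q ^ (k + 1) * δ) (q ^ k * δ), f x ∂μ = q ^ k * c) (n : ℕ) :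
    ∫ x in Ioc 0 (q ^ n * δ), f x ∂μ = q ^ n * (c / (1 - q)) := by
  have hu : Antitone fun k ↦ q ^ (n + k) * δ := fun i j hij ↦
    mul_le_mul_of_nonneg_right (pow_le_pow_of_le_one hq₀ hq₁.le (by omega)) hδ
  have hlim : Tendsto (fun k ↦ q ^ (n + k) * δ) atTop (𝓝 0) := by
    simpa using ((tendsto_pow_atTop_nhds_zero_of_lt_one hq₀ hq₁).comp
      (tendsto_atTop_atTop_of_monotone (fun _ _ h ↦ by omega) fun k ↦ ⟨k, by omega⟩)).mul_const δ
  have hint : IntegrableOn f (Ioc 0 (q ^ n * δ)) μ :=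
    hf.mono_set (Ioc_subset_Ioc_right (mul_le_of_le_one_left hδ (pow_le_one₀ hq₀ hq₁.le)))
  have hsum := hu.hasSum_setIntegral_Ioc hlim (by simpa using hint)
  simp only [← add_assoc, hpiece, add_zero] at hsum
  have hterm : (fun k ↦ q ^ (n + k) * c) = fun k ↦ q ^ n * c * q ^ k := by
    ext k
    ring
  rw [hterm] at hsum
  rw [hsum.unique ((hasSum_geometric_of_lt_one hq₀ hq₁).mul_left (q ^ n * c))]
  ring

theorem monotoneOn_setIntegral_Ioc {μ : Measure ℝ} {f : ℝ → ℝ} {a b : ℝ}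
    (hf₀ : ∀ x ∈ Ioc a b, 0 ≤ f x) (hf : IntegrableOn f (Ioc a b) μ) :
    MonotoneOn (fun t ↦ ∫ x in Ioc a t, f x ∂μ) (Iic b) := fun _ _ _ ht hst ↦
  setIntegral_mono_set (hf.mono_set (Ioc_subset_Ioc_right ht))
    ((ae_restrict_iff' measurableSet_Ioc).2 (.of_forall fun x hx ↦
      hf₀ x (Ioc_subset_Ioc_right ht hx)))
    (.of_forall (Ioc_subset_Ioc_right hst))

theorem MonotoneOn.bounds_of_geometric {F : ℝ → ℝ} {q δ M x : ℝ} (hF : MonotoneOn F (Ioc 0 δ))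
    (hq₀ : 0 < q) (hq₁ : q < 1) (hδ : 0 < δ) (hFq : ∀ n : ℕ, F (q ^ n * δ) = q ^ n * M)
    (hx : x ∈ Ioc 0 δ) :
    q * (x / δ * M) ≤ F x ∧ F x ≤ x / δ * M / q := by
  have hmem : ∀ n : ℕ, q ^ n * δ ∈ Ioc 0 δ := fun n ↦
    ⟨by positivity, mul_le_of_le_one_left hδ.le (pow_le_one₀ hq₀.le hq₁.le)⟩
  have hM : 0 ≤ M := by
    have h := hF (hmem 1) (hmem 0)
      (by rw [pow_one, pow_zero, one_mul]; exact mul_le_of_le_one_left hδ.le hq₁.le)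
    rw [hFq, hFq, pow_one, pow_zero, one_mul] at h
    nlinarith
  obtain ⟨n, hlt, hle⟩ := exists_nat_pow_near_of_lt_one (div_pos hx.1 hδ)
    ((div_le_one hδ).2 hx.2) hq₀ hq₁
  have hlow := hF (hmem (n + 1)) hx ((lt_div_iff₀ hδ).1 hlt).le
  have hupp := hF hx (hmem n) ((div_le_iff₀ hδ).1 hle)
  rw [hFq] at hlow hupp
  constructor
  · calc q * (x / δ * M) ≤ q * (q ^ n * M) := by gcongr
      _ = q ^ (n + 1) * M := by ring
      _ ≤ F x := hlow
  · calc F x ≤ q ^ n * M := hupp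
      _ = q ^ (n + 1) * M / q := by field_simp; ring
      _ ≤ x / δ * M / q := by gcongr

/-- Conclusion (B.1) of Appendix B: the constructed initial datum satisfies
`∫₀^ū |χ̂₀|² = f(ū)·ū·a` with `20/21 ≤ f ≤ 22/21` for all `ū ∈ (0, δ]`. -/
theorem stmt_3 (δ a : ℝ) (hδ : 0 < δ) (ha : 0 < a)
    (G : ℝ → ℝ) (hGnn : ∀ x, 0 ≤ G x)
    (hGint : IntegrableOn G (Set.Ioc 0 δ))
    (hpiece : ∀ k : ℕ,
      ∫ x in Set.Ioc ((99/100:ℝ)^(k+1) * δ) ((99/100:ℝ)^k * δ), G x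
        = (99/100:ℝ)^k * (δ * a / 100)) :
    ∀ ub : ℝ, ub ∈ Set.Ioc (0:ℝ) δ →
      ((20/21) * ub * a ≤ ∫ x in Set.Ioc (0:ℝ) ub, G x ∧
        (∫ x in Set.Ioc (0:ℝ) ub, G x) ≤ (22/21) * ub * a) ∧
      (20/21 ≤ (∫ x in Set.Ioc (0:ℝ) ub, G x) / (ub * a) ∧
        (∫ x in Set.Ioc (0:ℝ) ub, G x) / (ub * a) ≤ 22/21) := by
  intro ub hub
  have hgeom (n : ℕ) : ∫ x in Ioc 0 ((99/100:ℝ) ^ n * δ), G x = (99/100:ℝ) ^ n * (δ * a) := by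
    rw [setIntegral_Ioc_zero_pow_mul_of_geometric (by norm_num) (by norm_num) hδ.le hGint hpiece]
    ring
  have hmono : MonotoneOn (fun t ↦ ∫ x in Ioc 0 t, G x) (Ioc 0 δ) :=
    (monotoneOn_setIntegral_Ioc (fun x _ ↦ hGnn x) hGint).mono Ioc_subset_Iic_self
  obtain ⟨hlow, hupp⟩ := hmono.bounds_of_geometric (by norm_num) (by norm_num) hδ hgeom hub
  have hlin : ub / δ * (δ * a) = ub * a := by field_simp
  rw [hlin] at hlow hupp
  have hua : 0 < ub * a := mul_pos hub.1 ha
  refine ⟨⟨by linarith, by linarith⟩, ?_, ?_⟩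
  · rw [le_div_iff₀ hua]
    linarith
  · rw [div_le_iff₀ hua]
    linarith
end

section
/- Let c > 1, set q := c/(c+1), let δ > 0, a ≥ 0, and let G : ℝ → ℝ be nonnegative and integrable on (0, δ]. Suppose that for every k ∈ ℕ, the integral of G over (q^{k+1}·δ, q^k·δ] equals q^k·(1−q)·δ·a. Then for every ū ∈ (0, δ], (1 − 1/c)·ū·a ≤ ∫ over (0, ū] of G ≤ (1 + 1/c)·ū·a. -/
/-!
The intervals `(q^(n+1) r, q^n r]` tile `(0, r]`, so countable additivity of the integral turns
the prescribed piece integrals `q^n (1 - q) r a` into a geometric series: the integral over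
`(0, q^k r]` is exactly `q^k r a`. A point `x ∈ (0, r]` lies in some piece
`(q^(k+1) r, q^k r]`; since the integrand is nonnegative, the integral over `(0, x]` is squeezed
between `q^(k+1) r a ≥ q x a` and `q^k r a ≤ x a / q`. For `q = c/(c+1)` one has
`q ≥ 1 - 1/c` and `1/q = 1 + 1/c`.
-/

open MeasureTheory Set

section GeometricPieces

variable {q r : ℝ}

theorem exists_pow_mul_mem_Ioc (hq0 : 0 < q) (hq1 : q < 1) {x : ℝ} (hx : x ∈ Ioc 0 r) :
    ∃ n : ℕ, x ∈ Ioc (q ^ (n + 1) * r) (q ^ n * r) := by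
  have hr : 0 < r := hx.1.trans_le hx.2
  obtain ⟨n, hlt, hle⟩ := exists_nat_pow_near_of_lt_one (div_pos hx.1 hr)
    ((div_le_one hr).2 hx.2) hq0 hq1
  exact ⟨n, (lt_div_iff₀ hr).1 hlt, (div_le_iff₀ hr).1 hle⟩

theorem iUnion_Ioc_pow_mul (hq0 : 0 < q) (hq1 : q < 1) (hr : 0 ≤ r) :
    ⋃ n : ℕ, Ioc (q ^ (n + 1) * r) (q ^ n * r) = Ioc 0 r := by
  apply Subset.antisymm
  · exact iUnion_subset fun n => Ioc_subset_Ioc (by positivity)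
      (mul_le_of_le_one_left hr (pow_le_one₀ hq0.le hq1.le))
  · intro x hx
    exact mem_iUnion.2 (exists_pow_mul_mem_Ioc hq0 hq1 hx)

theorem pairwise_disjoint_Ioc_pow_mul (hq0 : 0 ≤ q) (hq1 : q ≤ 1) (hr : 0 ≤ r) :
    Pairwise (Function.onFun Disjoint fun n : ℕ => Ioc (q ^ (n + 1) * r) (q ^ n * r)) := by
  have hanti : Antitone fun n : ℕ => q ^ n * r :=
    fun _ _ hmn => mul_le_mul_of_nonneg_right (pow_le_pow_of_le_one hq0 hq1 hmn) hr
  simpa only [Order.succ_eq_add_one] using hanti.pairwise_disjoint_on_Ioc_succ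

theorem setIntegral_Ioc_zero_eq_of_geometric_pieces (hq0 : 0 < q) (hq1 : q < 1) (hr : 0 ≤ r)
    {f : ℝ → ℝ} (hf : IntegrableOn f (Ioc 0 r)) {s : ℝ}
    (hpiece : ∀ n : ℕ, ∫ x in Ioc (q ^ (n + 1) * r) (q ^ n * r), f x = q ^ n * s) :
    ∫ x in Ioc 0 r, f x = s / (1 - q) := by
  have hsum := hasSum_integral_iUnion (fun n => measurableSet_Ioc)
    (pairwise_disjoint_Ioc_pow_mul hq0.le hq1.le hr)
    (by rwa [iUnion_Ioc_pow_mul hq0 hq1 hr])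
  rw [iUnion_Ioc_pow_mul hq0 hq1 hr, funext hpiece] at hsum
  rw [hsum.unique ((hasSum_geometric_of_lt_one hq0.le hq1).mul_right s), div_eq_inv_mul]

theorem setIntegral_Ioc_zero_pow_mul_eq_of_geometric_pieces (hq0 : 0 < q) (hq1 : q < 1)
    (hr : 0 ≤ r) {f : ℝ → ℝ} (hf : IntegrableOn f (Ioc 0 r)) {s : ℝ}
    (hpiece : ∀ n : ℕ, ∫ x in Ioc (q ^ (n + 1) * r) (q ^ n * r), f x = q ^ n * s) (k : ℕ) :
    ∫ x in Ioc 0 (q ^ k * r), f x = q ^ k * s / (1 - q) := by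
  refine setIntegral_Ioc_zero_eq_of_geometric_pieces hq0 hq1 (by positivity)
    (hf.mono_set (Ioc_subset_Ioc le_rfl (mul_le_of_le_one_left hr (pow_le_one₀ hq0.le hq1.le))))
    fun n => ?_
  simpa only [← mul_assoc, ← pow_add, add_right_comm n k 1, add_comm k n, mul_left_comm (q ^ n)]
    using hpiece (n + k)

theorem setIntegral_Ioc_zero_mono_right {f : ℝ → ℝ} (hf_nonneg : ∀ x, 0 ≤ f x)
    (hf : IntegrableOn f (Ioc 0 r)) {u v : ℝ} (huv : u ≤ v) (hvr : v ≤ r) :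
    ∫ x in Ioc 0 u, f x ≤ ∫ x in Ioc 0 v, f x :=
  setIntegral_mono_set (hf.mono_set (Ioc_subset_Ioc le_rfl hvr))
    (.of_forall hf_nonneg) (.of_forall (Ioc_subset_Ioc le_rfl huv))

theorem setIntegral_Ioc_zero_bounds_of_geometric_pieces (hq0 : 0 < q) (hq1 : q < 1)
    (hr : 0 ≤ r) {a : ℝ} (ha : 0 ≤ a) {f : ℝ → ℝ} (hf_nonneg : ∀ x, 0 ≤ f x)
    (hf : IntegrableOn f (Ioc 0 r))
    (hpiece : ∀ n : ℕ, ∫ x in Ioc (q ^ (n + 1) * r) (q ^ n * r), f x = q ^ n * (1 - q) * r * a)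
    {x : ℝ} (hx : x ∈ Ioc 0 r) :
    q * x * a ≤ ∫ y in Ioc 0 x, f y ∧ ∫ y in Ioc 0 x, f y ≤ x / q * a := by
  have hI (n : ℕ) : ∫ y in Ioc 0 (q ^ n * r), f y = q ^ n * r * a := by
    rw [setIntegral_Ioc_zero_pow_mul_eq_of_geometric_pieces hq0 hq1 hr hf
      (s := (1 - q) * r * a) (by simpa only [mul_assoc] using hpiece)]
    field_simp [(sub_pos.2 hq1).ne']
  obtain ⟨k, hk_lt, hk_le⟩ := exists_pow_mul_mem_Ioc hq0 hq1 hx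
  constructor
  · calc q * x * a ≤ q ^ (k + 1) * r * a := by
          rw [pow_succ', mul_assoc q (q ^ k) r]
          gcongr
      _ = ∫ y in Ioc 0 (q ^ (k + 1) * r), f y := (hI _).symm
      _ ≤ ∫ y in Ioc 0 x, f y := setIntegral_Ioc_zero_mono_right hf_nonneg hf hk_lt.le hx.2
  · calc ∫ y in Ioc 0 x, f y ≤ ∫ y in Ioc 0 (q ^ k * r), f y :=
          setIntegral_Ioc_zero_mono_right hf_nonneg hf hk_le
            (mul_le_of_le_one_left hr (pow_le_one₀ hq0.le hq1.le))
      _ = q ^ k * r * a := hI k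
      _ ≤ x / q * a := by
          gcongr
          rw [le_div_iff₀ hq0, mul_right_comm, ← pow_succ]
          exact hk_lt.le

end GeometricPieces

/-- Remark B.1 of the paper: for any large constant `c`, initial data with
`∫₀^ū |χ̂₀|² = f·ū·a` and `1 − 1/c ≤ f ≤ 1 + 1/c` via `q = c/(c+1)`. -/
theorem stmt_4 (c δ a : ℝ) (hc : 1 < c) (hδ : 0 < δ) (ha : 0 ≤ a)
    (G : ℝ → ℝ) (hGnn : ∀ x, 0 ≤ G x)
    (hGint : IntegrableOn G (Set.Ioc 0 δ))
    (hpiece : ∀ k : ℕ,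
      ∫ x in Set.Ioc ((c/(c+1))^(k+1) * δ) ((c/(c+1))^k * δ), G x
        = (c/(c+1))^k * (1 - c/(c+1)) * δ * a) :
    ∀ ub : ℝ, ub ∈ Set.Ioc (0:ℝ) δ →
      (1 - 1/c) * ub * a ≤ ∫ x in Set.Ioc (0:ℝ) ub, G x ∧
      (∫ x in Set.Ioc (0:ℝ) ub, G x) ≤ (1 + 1/c) * ub * a := by
  intro ub hub
  have hc0 : 0 < c := one_pos.trans hc
  have hq0 : 0 < c / (c + 1) := by positivity
  have hq1 : c / (c + 1) < 1 := (div_lt_one (by linarith)).2 (lt_add_one c)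
  obtain ⟨hlower, hupper⟩ := setIntegral_Ioc_zero_bounds_of_geometric_pieces hq0 hq1 hδ.le ha
    hGnn hGint hpiece hub
  have hq_ge : 1 - 1 / c ≤ c / (c + 1) := by
    rw [one_sub_div hc0.ne', div_le_div_iff₀ hc0 (by linarith)]
    nlinarith
  have hq_inv : ub / (c / (c + 1)) = (1 + 1 / c) * ub := by
    field_simp
  exact ⟨le_trans (by gcongr; exact hub.1.le) hlower, hupper.trans_eq (by rw [hq_inv])⟩
end
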